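/- Let V = ⟨V_a⟩ be a Lusin π-base for a topological space (X,τ) and let f : (X,τ) → (Y,σ) be an open continuous surjection. Then f⟨V⟩ is an α-scheme for (Y,σ). -/

import Mathlib

open Set Topology

universe u v

/-- The restriction `p↾n` of `p : ℕ → ℕ`, as a finite sequence in `ω^{<ω}`. -/
def pre (p : ℕ → ℕ) (n : ℕ) : List ℕ := List.ofFn fun i : Fin n => p i

/-- `a ⊑ p` : the finite sequence `a` is an initial segment of the branch `p`. -/
def IsPre (a : List ℕ) (p : ℕ → ℕ) : Prop := a = pre p a.length

/-- `S_a = {p ∈ ω^ω : a ⊑ p}`, the pieces of the standard Lusin scheme. -/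
def stdS (a : List ℕ) : Set (ℕ → ℕ) := {p | IsPre a p}

section scheme

variable {X Y : Type*}

/-- `fruit_p(V) = ⋂_n V_{p↾n}`. -/
def fruit (V : List ℕ → Set X) (p : ℕ → ℕ) : Set X := ⋂ n, V (pre p n)

/-- `flesh(V) = ⋃_a V_a`. -/
def flesh (V : List ℕ → Set X) : Set X := ⋃ a, V a

/-- The Souslin scheme `V` covers the set `A`. -/
def Covers (V : List ℕ → Set X) (A : Set X) : Prop :=
  V [] = A ∧ ∀ a, V a = ⋃ n, V (a ++ [n])

/-- The Souslin scheme `V` partitions the set `A`. -/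
def Partitions (V : List ℕ → Set X) (A : Set X) : Prop :=
  Covers V A ∧ ∀ a, ∀ n m : ℕ, n ≠ m → V (a ++ [n]) ∩ V (a ++ [m]) = ∅

/-- `V` is complete: every fruit is nonempty. -/
def CompleteScheme (V : List ℕ → Set X) : Prop := ∀ q : ℕ → ℕ, (fruit V q).Nonempty

/-- `V` has strict branches: every fruit is a singleton. -/
def StrictBranches (V : List ℕ → Set X) : Prop := ∀ q : ℕ → ℕ, ∃ x, fruit V q = {x}

/-- `V` is regular: `V_{a⌢n} ⊆ V_a`. -/
def RegularScheme (V : List ℕ → Set X) : Prop := ∀ a n, V (a ++ [n]) ⊆ V a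

/-- `V` has nonempty leaves. -/
def NonemptyLeaves (V : List ℕ → Set X) : Prop := ∀ a, (V a).Nonempty

/-- `V` is an open Souslin scheme with respect to the topology `t`. -/
def OpenScheme (t : TopologicalSpace X) (V : List ℕ → Set X) : Prop := ∀ a, t.IsOpen (V a)

/-- `V` is semi-open with respect to the topology `t`: `V_a ⊆ Cl_t(Int_t(V_a))`. -/
def SemiOpenScheme (t : TopologicalSpace X) (V : List ℕ → Set X) : Prop :=
  ∀ a, V a ⊆ @closure _ t (@interior _ t (V a))

/-- `Ṽ^k_b = ⋃_{j ≥ k} V_{b⌢j}`. -/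
def shootSet (V : List ℕ → Set X) (b : List ℕ) (k : ℕ) : Set X :=
  ⋃ j, ⋃ (_ : k ≤ j), V (b ++ [j])

/-- `shoot_b(V) = {Ṽ^k_b : k ∈ ω}`. -/
def shoot (V : List ℕ → Set X) (b : List ℕ) : Set (Set X) := {G | ∃ k, G = shootSet V b k}

/-- `γ → U`: some member of the family `γ` is contained in `U`. -/
def Engulfs (γ : Set (Set X)) (U : Set X) : Prop := ∃ G ∈ γ, G ⊆ U

/-- `p →_V U`: there is an infinite `L ⊆ ω` with `shoot_{p↾n}(V) → U` for all `n ∈ L`. -/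
def ArrowSeq (V : List ℕ → Set X) (p : ℕ → ℕ) (U : Set X) : Prop :=
  ∃ L : Set ℕ, L.Infinite ∧ ∀ n ∈ L, Engulfs (shoot V (pre p n)) U

/-- `p →_{V,t} x`: `p →_V U` for every `t`-open `U` containing `x`. -/
def ArrowPt (t : TopologicalSpace X) (V : List ℕ → Set X) (p : ℕ → ℕ) (x : X) : Prop :=
  ∀ U : Set X, t.IsOpen U → x ∈ U → ArrowSeq V p U

/-- `V` is a Lusin π-base for `(X, t)`. -/
def LusinPiBase (t : TopologicalSpace X) (V : List ℕ → Set X) : Prop :=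
  OpenScheme t V ∧ Partitions V Set.univ ∧ StrictBranches V ∧
    ∀ x : X, ∀ U : Set X, t.IsOpen U → x ∈ U →
      ∃ a : List ℕ, ∃ n : ℕ, x ∈ V a ∧ shootSet V a n ⊆ U

/-- `V` is an α-scheme for `(X, t)`. -/
def AlphaScheme (t : TopologicalSpace X) (V : List ℕ → Set X) : Prop :=
  OpenScheme t V ∧ CompleteScheme V ∧ Covers V Set.univ ∧
    (∀ a : List ℕ, ∀ x ∈ V a, ∃ p : ℕ → ℕ, IsPre a p ∧ x ∈ fruit V p ∧ ArrowPt t V p x) ∧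
    (∀ p : ℕ → ℕ, ∃ x ∈ fruit V p, ArrowPt t V p x)

/-- `V` is a ramose α-scheme for `(X, t)`. -/
def RamoseAlphaScheme (t : TopologicalSpace X) (V : List ℕ → Set X) : Prop :=
  AlphaScheme t V ∧ ∀ a : List ℕ, ∀ x ∈ V a,
    Cardinal.mk {p : ℕ → ℕ // IsPre a p ∧ x ∈ fruit V p ∧ ArrowPt t V p x} = Cardinal.continuum

/-- `γ` is a π-base for `(X, t)`. -/
def PiBase (t : TopologicalSpace X) (γ : Set (Set X)) : Prop :=
  (∀ G ∈ γ, G.Nonempty ∧ t.IsOpen G) ∧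
    ∀ U : Set X, t.IsOpen U → U.Nonempty → ∃ G ∈ γ, G ⊆ U

/-- `γ` is a π-net for the subspace `A` of `(X, t)`. -/
def PiNetFor (t : TopologicalSpace X) (γ : Set (Set X)) (A : Set X) : Prop :=
  (∀ G ∈ γ, G.Nonempty) ∧
    ∀ U : Set X, t.IsOpen U → (U ∩ A).Nonempty → ∃ G ∈ γ, G ⊆ U ∩ A

/-- `V` is a π-base Souslin scheme on `(X, t)`:
an open scheme such that `{V_b : a ⊑ b}` is a π-net for the subspace `V_a`, for each `a`. -/
def PiBaseScheme (t : TopologicalSpace X) (V : List ℕ → Set X) : Prop :=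
  OpenScheme t V ∧ ∀ a, PiNetFor t {S | ∃ b, a <+: b ∧ S = V b} (V a)

/-- `(X, t)` is a π-space. -/
def PiSpace (t : TopologicalSpace X) : Prop :=
  ∃ V : List ℕ → Set X, OpenScheme t V ∧ Partitions V Set.univ ∧ StrictBranches V ∧
    PiBase t {S | ∃ a, S = V a}

/-- `(X, t)` is zero-dimensional: it has a base consisting of clopen sets. -/
def ZeroDimT (t : TopologicalSpace X) : Prop :=
  ∀ U : Set X, t.IsOpen U → ∀ x ∈ U, ∃ C : Set X, t.IsOpen C ∧ @IsClosed _ t C ∧ x ∈ C ∧ C ⊆ U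

/-- `branches_V(x) = {q ∈ ω^ω : x ∈ fruit_q(V)}`. -/
def branches (V : List ℕ → Set X) (x : X) : Set (ℕ → ℕ) := {q | x ∈ fruit V q}

/-- `f` is a selector on `V`: a surjection of `ω^ω` onto `flesh(V)` such that each fiber
`f⁻¹(x)` is a dense subset of the subspace `branches_V(x)` of the Baire space. -/
def IsSelector (V : List ℕ → Set X) (f : (ℕ → ℕ) → X) : Prop :=
  (∀ p, f p ∈ flesh V) ∧ (∀ x ∈ flesh V, ∃ p, f p = x) ∧
    ∀ x ∈ flesh V, f ⁻¹' {x} ⊆ branches V x ∧ branches V x ⊆ closure (f ⁻¹' {x})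

/-- The topology `σ_{t,f}` on `ω^ω` generated by the subbase
`{f⁻¹[U] : U ∈ t} ∪ {S_a : a ∈ ω^{<ω}}`. -/
def sigmaTop (t : TopologicalSpace X) (f : (ℕ → ℕ) → X) : TopologicalSpace (ℕ → ℕ) :=
  TopologicalSpace.generateFrom
    ({S | ∃ U : Set X, t.IsOpen U ∧ S = f ⁻¹' U} ∪ {S | ∃ a : List ℕ, S = stdS a})

end scheme

/-- `(ω^ω, t)` is a standard π-space: the family `τ_N \ {∅}` of nonempty open sets of the
Baire space is a π-base for `(ω^ω, t)`. -/
def StandardPiSpace (t : TopologicalSpace (ℕ → ℕ)) : Prop :=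
  (∀ U : Set (ℕ → ℕ), IsOpen U → U.Nonempty → t.IsOpen U) ∧
    ∀ U : Set (ℕ → ℕ), t.IsOpen U → U.Nonempty → ∃ G : Set (ℕ → ℕ), IsOpen G ∧ G.Nonempty ∧ G ⊆ U

/-!
A point `x ∈ V_a` lies on a branch `p ⊒ a` of the Lusin π-base, and every point lies on some
branch. Along a branch through `x`, condition (L6) applied to `U ∩ V_{p↾N}` yields shoots
inside `U` at arbitrarily deep levels `n ≥ N`: since `V` partitions `X`, the node `a` it
produces lies on `p`, and if `a` is shallower than `N` then the whole node `V_{p↾(|a|+1)}`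
already lies inside `U`. So `p →_{V,τ} x`, and continuity of `f` carries this to
`p →_{f⟨V⟩,σ} f x`; openness and surjectivity of `f` give the remaining clauses.
-/

lemma isPre_iff {a : List ℕ} {p : ℕ → ℕ} : IsPre a p ↔ ∀ i (hi : i < a.length), p i = a[i] := by
  rw [IsPre, List.ext_get_iff]
  simp [pre, eq_comm]

lemma pre_succ (p : ℕ → ℕ) (n : ℕ) : pre p (n + 1) = pre p n ++ [p n] := by
  rw [pre, List.ofFn_succ', List.concat_eq_append]
  rfl

lemma exists_isPre (a : List ℕ) : ∃ p, IsPre a p :=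
  ⟨fun i => a.getD i 0, isPre_iff.2 fun _ hi => List.getD_eq_getElem _ _ hi⟩

/-- The branch that follows `a` and then always moves to the child `c b` of the current
node `b`. -/
def branchFrom (a : List ℕ) (c : List ℕ → ℕ) (n : ℕ) : ℕ :=
  if h : n < a.length then a[n] else c (List.ofFn fun i : Fin n => branchFrom a c i)
decreasing_by exact i.2

lemma branchFrom_of_lt {a : List ℕ} (c : List ℕ → ℕ) {n : ℕ} (h : n < a.length) :
    branchFrom a c n = a[n] := by
  rw [branchFrom, dif_pos h]

lemma branchFrom_of_le {a : List ℕ} (c : List ℕ → ℕ) {n : ℕ} (h : a.length ≤ n) :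
    branchFrom a c n = c (pre (branchFrom a c) n) := by
  rw [branchFrom, dif_neg (not_lt.2 h)]
  rfl

lemma isPre_branchFrom (a : List ℕ) (c : List ℕ → ℕ) : IsPre a (branchFrom a c) :=
  isPre_iff.2 fun _ hi => branchFrom_of_lt c hi

section scheme

variable {X Y : Type*} {V : List ℕ → Set X}

lemma mem_fruit_iff {p : ℕ → ℕ} {x : X} : x ∈ fruit V p ↔ ∀ n, x ∈ V (pre p n) :=
  Set.mem_iInter

lemma image_shootSet (f : X → Y) (b : List ℕ) (k : ℕ) :
    f '' shootSet V b k = shootSet (fun a => f '' V a) b k := by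
  simp only [shootSet, Set.image_iUnion]

lemma mem_fruit_image (f : X → Y) {p : ℕ → ℕ} {x : X} (hx : x ∈ fruit V p) :
    f x ∈ fruit (fun a => f '' V a) p :=
  mem_fruit_iff.2 fun n => Set.mem_image_of_mem f (mem_fruit_iff.1 hx n)

namespace Covers

variable {A : Set X} (hV : Covers V A)
include hV

lemma append_subset (a : List ℕ) (n : ℕ) : V (a ++ [n]) ⊆ V a := by
  rw [hV.2 a]
  exact Set.subset_iUnion (fun n => V (a ++ [n])) n

lemma antitone_pre (p : ℕ → ℕ) : Antitone fun n => V (pre p n) :=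
  antitone_nat_of_succ_le fun n => by
    simpa only [pre_succ] using hV.append_subset (pre p n) (p n)

lemma shootSet_subset (b : List ℕ) (k : ℕ) : shootSet V b k ⊆ V b :=
  Set.iUnion₂_subset fun j _ => hV.append_subset b j

lemma engulfs_shoot {b : List ℕ} {U : Set X} (h : V b ⊆ U) : Engulfs (shoot V b) U :=
  ⟨shootSet V b 0, ⟨0, rfl⟩, (hV.shootSet_subset b 0).trans h⟩

lemma image (f : X → Y) : Covers (fun a => f '' V a) (f '' A) :=
  ⟨congrArg (f '' ·) hV.1, fun a => by simp only [hV.2 a, Set.image_iUnion]⟩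

lemma exists_isPre_mem_fruit {a : List ℕ} {x : X} (hx : x ∈ V a) :
    ∃ p, IsPre a p ∧ x ∈ fruit V p := by
  have hchild : ∀ b, x ∈ V b → ∃ j, x ∈ V (b ++ [j]) := fun b hb => by
    rw [hV.2 b] at hb
    exact Set.mem_iUnion.1 hb
  choose! c hc using hchild
  set p := branchFrom a c
  have hpa : pre p a.length = a := (isPre_branchFrom a c).symm
  have hdeep : ∀ n, a.length ≤ n → x ∈ V (pre p n) := by
    intro n hn
    induction n, hn using Nat.le_induction with
    | base => rwa [hpa]
    | succ n hn ih =>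
      rw [pre_succ, show p n = c (pre p n) from branchFrom_of_le c hn]
      exact hc _ ih
  refine ⟨p, isPre_branchFrom a c, mem_fruit_iff.2 fun n => ?_⟩
  rcases le_total a.length n with h | h
  · exact hdeep n h
  · exact hV.antitone_pre p h (hdeep _ le_rfl)

end Covers

lemma Partitions.isPre_of_mem {A : Set X} (hV : Partitions V A) {p : ℕ → ℕ} {x : X} :
    ∀ {a : List ℕ}, x ∈ V a → x ∈ V (pre p a.length) → IsPre a p := by
  intro a
  induction a using List.reverseRecOn with
  | nil => intro _ _; rfl
  | append_singleton b j ih =>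
    intro hxa hxp
    rw [List.length_append, List.length_singleton, pre_succ] at hxp
    have hb : b = pre p b.length :=
      ih (hV.1.append_subset b j hxa) (hV.1.append_subset _ _ hxp)
    have hj : j = p b.length := by
      by_contra hj
      have hdisj := hV.2 (pre p b.length) j (p b.length) hj
      rw [← hb] at hdisj hxp
      exact (Set.eq_empty_iff_forall_notMem.1 hdisj) x ⟨hxa, hxp⟩
    rw [IsPre, List.length_append, List.length_singleton, pre_succ, ← hb, ← hj]

lemma StrictBranches.fruit_nonempty (hV : StrictBranches V) (p : ℕ → ℕ) :
    (fruit V p).Nonempty := by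
  obtain ⟨x, hx⟩ := hV p
  exact ⟨x, hx ▸ rfl⟩

lemma StrictBranches.nonempty (hV : StrictBranches V) (a : List ℕ) : (V a).Nonempty := by
  obtain ⟨p, hp⟩ := exists_isPre a
  obtain ⟨x, hx⟩ := hV.fruit_nonempty p
  exact ⟨x, hp ▸ mem_fruit_iff.1 hx a.length⟩

namespace LusinPiBase

variable [TopologicalSpace X] (hV : LusinPiBase ‹_› V)
include hV

lemma exists_ge_engulfs_shoot {p : ℕ → ℕ} {x : X} (hx : x ∈ fruit V p) {U : Set X}
    (hU : IsOpen U) (hxU : x ∈ U) (N : ℕ) :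
    ∃ n ≥ N, Engulfs (shoot V (pre p n)) U := by
  obtain ⟨hopen, hpart, hsb, hL6⟩ := hV
  have hxp := mem_fruit_iff.1 hx
  obtain ⟨a, m, hxa, hsub⟩ := hL6 x _ (hU.inter (hopen _)) ⟨hxU, hxp N⟩
  have ha : a = pre p a.length := hpart.isPre_of_mem hxa (hxp _)
  have hshoot : shootSet V a m ⊆ U := hsub.trans Set.inter_subset_left
  rcases le_or_gt N a.length with hN | hN
  · exact ⟨a.length, hN, shootSet V a m, ⟨m, by rw [← ha]⟩, hshoot⟩
  -- `V_{a⌢m}` meets `V_{p↾N}`, so `a⌢m` lies on `p`, and `V_{p↾N} ⊆ V_{a⌢m} ⊆ U`.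
  have hchild : V (a ++ [m]) ⊆ shootSet V a m :=
    Set.subset_iUnion₂ (s := fun j (_ : m ≤ j) => V (a ++ [j])) m le_rfl
  obtain ⟨z, hz⟩ := hsb.nonempty (a ++ [m])
  have hzN : z ∈ V (pre p N) := (hsub (hchild hz)).2
  have ham : IsPre (a ++ [m]) p :=
    hpart.isPre_of_mem hz (hpart.1.antitone_pre p (by simpa using hN) hzN)
  rw [IsPre, List.length_append, List.length_singleton] at ham
  refine ⟨N, le_rfl, hpart.1.engulfs_shoot ?_⟩
  calc V (pre p N) ⊆ V (pre p (a.length + 1)) := hpart.1.antitone_pre p hN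
    _ = V (a ++ [m]) := by rw [ham]
    _ ⊆ U := hchild.trans hshoot

lemma arrowPt {p : ℕ → ℕ} {x : X} (hx : x ∈ fruit V p) : ArrowPt ‹_› V p x :=
  fun _ hU hxU => ⟨_, Nat.frequently_atTop_iff_infinite.1
    (Filter.frequently_atTop.2 (hV.exists_ge_engulfs_shoot hx hU hxU)), fun _ hn => hn⟩

end LusinPiBase

lemma ArrowPt.image [tX : TopologicalSpace X] [tY : TopologicalSpace Y] {f : X → Y}
    (hc : Continuous f) {p : ℕ → ℕ} {x : X} (h : ArrowPt tX V p x) :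
    ArrowPt tY (fun a => f '' V a) p (f x) := by
  intro U hU hxU
  obtain ⟨L, hLinf, hL⟩ := h (f ⁻¹' U) (hc.isOpen_preimage U hU) hxU
  refine ⟨L, hLinf, fun n hn => ?_⟩
  obtain ⟨_, ⟨k, rfl⟩, hG⟩ := hL n hn
  exact ⟨_, ⟨k, rfl⟩, image_shootSet f _ k ▸ Set.image_subset_iff.2 hG⟩

end scheme

/-- If `V` is a Lusin π-base for `(X,τ)` and `f : (X,τ) → (Y,σ)` is an open continuous
surjection, then `f⟨V⟩` is an α-scheme for `(Y,σ)`. -/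
theorem statement10 {X Y : Type*} [tX : TopologicalSpace X] [tY : TopologicalSpace Y]
    (V : List ℕ → Set X) (hV : LusinPiBase tX V) (f : X → Y)
    (hc : Continuous f) (ho : IsOpenMap f) (hs : Function.Surjective f) :
    AlphaScheme tY (fun a => f '' V a) := by
  have ⟨hopen, hpart, hsb, _⟩ := hV
  have hcov : Covers (fun a => f '' V a) Set.univ := by
    simpa only [Set.image_univ_of_surjective hs] using hpart.1.image f
  refine ⟨fun a => ho _ (hopen a), fun q => ?_, hcov, ?_, fun p => ?_⟩
  · obtain ⟨x, hx⟩ := hsb.fruit_nonempty q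
    exact ⟨f x, mem_fruit_image f hx⟩
  · rintro a _ ⟨x, hxa, rfl⟩
    obtain ⟨p, hap, hx⟩ := hpart.1.exists_isPre_mem_fruit hxa
    exact ⟨p, hap, mem_fruit_image f hx, (hV.arrowPt hx).image hc⟩
  · obtain ⟨x, hx⟩ := hsb.fruit_nonempty p
    exact ⟨f x, mem_fruit_image f hx, (hV.arrowPt hx).image hc⟩
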